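/- arXiv:0711.2444 — 2 statements merged into one kernel-verified Lean document; each statement's English description precedes it below -/
import Mathlib

section
/- In the display sequent calculus for the Lambek–Grishin connectives (with units), the sequent (⊥ ∘− A) ⊸ ⊥ ⊢ A is derivable using the logical rules, the display rules, the identity structural rules for the units, and the Grishin mixed associativity rules Gr1 and Gr1'. -/
/-- Formulas of the Lambek–Grishin calculus with units: atoms, the units 1 and
⊥, the residuated family ⊗, ⊸, ∘− and the dual residuated family ⅋ (par) with
its co-implications ↽ and ⇁. -/
inductive Fm where
  | atom : ℕ → Fm
  | one : Fm                 -- 1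
  | bot : Fm                 -- ⊥
  | tens : Fm → Fm → Fm      -- A ⊗ B
  | limp : Fm → Fm → Fm      -- A ⊸ B
  | rimp : Fm → Fm → Fm      -- A ∘− B
  | par : Fm → Fm → Fm       -- A ⅋ B
  | lcoimp : Fm → Fm → Fm    -- A ↽ B
  | rcoimp : Fm → Fm → Fm    -- A ⇁ B
  deriving DecidableEq

/-- Structures: formulas, the empty structure ε and the structural connectives
∘, <, > . -/
inductive St where
  | of : Fm → St
  | eps : St
  | comma : St → St → St     -- ∘
  | lt : St → St → St        -- <
  | gt : St → St → St        -- >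
  deriving DecidableEq

/-- Derivability in the display sequent calculus. -/
inductive Deriv : St → St → Prop
  -- axiom
  | ax (A : Fm) : Deriv (St.of A) (St.of A)
  -- logical rules for the units
  | lone {Δ} : Deriv St.eps Δ → Deriv (St.of Fm.one) Δ
  | rone : Deriv St.eps (St.of Fm.one)
  | lbot : Deriv (St.of Fm.bot) St.eps
  | rbot {Γ} : Deriv Γ St.eps → Deriv Γ (St.of Fm.bot)
  -- logical rules for ⊗, ⊸, ∘−
  | ltens {A B Δ} : Deriv (St.comma (St.of A) (St.of B)) Δ → Deriv (St.of (Fm.tens A B)) Δ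
  | rtens {A B Γ₁ Γ₂} : Deriv Γ₁ (St.of A) → Deriv Γ₂ (St.of B) →
      Deriv (St.comma Γ₁ Γ₂) (St.of (Fm.tens A B))
  | llimp {A B Γ Δ} : Deriv Γ (St.of A) → Deriv (St.of B) Δ →
      Deriv (St.of (Fm.limp A B)) (St.gt Γ Δ)
  | rlimp {A B Γ} : Deriv Γ (St.gt (St.of A) (St.of B)) → Deriv Γ (St.of (Fm.limp A B))
  | lrimp {A B Γ Δ} : Deriv (St.of A) Δ → Deriv Γ (St.of B) →
      Deriv (St.of (Fm.rimp A B)) (St.lt Δ Γ)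
  | rrimp {A B Γ} : Deriv Γ (St.lt (St.of A) (St.of B)) → Deriv Γ (St.of (Fm.rimp A B))
  -- logical rules for ⅋, ↽, ⇁
  | lpar {A B Δ₁ Δ₂} : Deriv (St.of A) Δ₁ → Deriv (St.of B) Δ₂ →
      Deriv (St.of (Fm.par A B)) (St.comma Δ₁ Δ₂)
  | rpar {A B Γ} : Deriv Γ (St.comma (St.of A) (St.of B)) → Deriv Γ (St.of (Fm.par A B))
  | lrcoimp {A B Δ} : Deriv (St.gt (St.of A) (St.of B)) Δ → Deriv (St.of (Fm.rcoimp A B)) Δ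
  | rrcoimp {A B Γ Δ} : Deriv (St.of A) Δ → Deriv Γ (St.of B) →
      Deriv (St.gt Δ Γ) (St.of (Fm.rcoimp A B))
  | llcoimp {A B Δ} : Deriv (St.lt (St.of A) (St.of B)) Δ → Deriv (St.of (Fm.lcoimp A B)) Δ
  | rlcoimp {A B Γ Δ} : Deriv Γ (St.of A) → Deriv (St.of B) Δ →
      Deriv (St.lt Γ Δ) (St.of (Fm.lcoimp A B))
  -- display rules (residuation): Γ₁ ∘ Γ₂ ⊢ Δ ⇔ Γ₁ ⊢ Δ < Γ₂ ⇔ Γ₂ ⊢ Γ₁ > Δ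
  | rc1 {Γ₁ Γ₂ Δ} : Deriv (St.comma Γ₁ Γ₂) Δ → Deriv Γ₁ (St.lt Δ Γ₂)
  | rc1' {Γ₁ Γ₂ Δ} : Deriv Γ₁ (St.lt Δ Γ₂) → Deriv (St.comma Γ₁ Γ₂) Δ
  | rc2 {Γ₁ Γ₂ Δ} : Deriv (St.comma Γ₁ Γ₂) Δ → Deriv Γ₂ (St.gt Γ₁ Δ)
  | rc2' {Γ₁ Γ₂ Δ} : Deriv Γ₂ (St.gt Γ₁ Δ) → Deriv (St.comma Γ₁ Γ₂) Δ
  -- display rules (dual residuation): Γ ⊢ Δ₁ ∘ Δ₂ ⇔ Γ < Δ₂ ⊢ Δ₁ ⇔ Δ₁ > Γ ⊢ Δ₂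
  | drc1 {Γ Δ₁ Δ₂} : Deriv Γ (St.comma Δ₁ Δ₂) → Deriv (St.lt Γ Δ₂) Δ₁
  | drc1' {Γ Δ₁ Δ₂} : Deriv (St.lt Γ Δ₂) Δ₁ → Deriv Γ (St.comma Δ₁ Δ₂)
  | drc2 {Γ Δ₁ Δ₂} : Deriv Γ (St.comma Δ₁ Δ₂) → Deriv (St.gt Δ₁ Γ) Δ₂
  | drc2' {Γ Δ₁ Δ₂} : Deriv (St.gt Δ₁ Γ) Δ₂ → Deriv Γ (St.comma Δ₁ Δ₂)
  -- identity structural rules for the units (right/left identity, both sides)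
  | idr {Γ Δ} : Deriv (St.comma Γ St.eps) Δ → Deriv Γ Δ
  | idr' {Γ Δ} : Deriv Γ Δ → Deriv (St.comma Γ St.eps) Δ
  | idl {Γ Δ} : Deriv (St.comma St.eps Γ) Δ → Deriv Γ Δ
  | idl' {Γ Δ} : Deriv Γ Δ → Deriv (St.comma St.eps Γ) Δ
  | didr {Γ Δ} : Deriv Γ (St.comma Δ St.eps) → Deriv Γ Δ
  | didr' {Γ Δ} : Deriv Γ Δ → Deriv Γ (St.comma Δ St.eps)
  | didl {Γ Δ} : Deriv Γ (St.comma St.eps Δ) → Deriv Γ Δ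
  | didl' {Γ Δ} : Deriv Γ Δ → Deriv Γ (St.comma St.eps Δ)
  -- Grishin mixed associativity rules Gr1 and Gr1'
  | gr1 {V W X Y} : Deriv (St.comma V W) (St.comma X Y) → Deriv (St.comma (St.gt X V) W) Y
  | gr1' {V W X Y} : Deriv (St.comma (St.gt X V) W) Y → Deriv (St.comma V W) (St.comma X Y)

/-! With the unit laws, Gr1 and Gr1' make `Δ > ε` a structural negation: `(Δ > ε) ∘ Γ ⊢ ε` holds
exactly when `Γ ⊢ Δ`. Hence `A > ε ⊢ ⊥ ∘− A`, so the left rule for `⊸` gives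
`(⊥ ∘− A) ⊸ ⊥ ⊢ (A > ε) > ε`, which displays to `(A > ε) ∘ ((⊥ ∘− A) ⊸ ⊥) ⊢ ε`, i.e. to
`(⊥ ∘− A) ⊸ ⊥ ⊢ A`. -/

namespace Deriv

theorem gt_eps_comma_iff {Γ Δ : St} :
    Deriv (St.comma (St.gt Δ St.eps) Γ) St.eps ↔ Deriv Γ Δ :=
  ⟨fun h => didr (idl (gr1' h)), fun h => gr1 (idl' (didr' h))⟩

theorem gt_eps_rimp_bot {A : Fm} {Δ : St} (h : Deriv (St.of A) Δ) :
    Deriv (St.gt Δ St.eps) (St.of (Fm.rimp Fm.bot A)) :=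
  rrimp (rc1 (rbot (gt_eps_comma_iff.mpr h)))

end Deriv

/-- In the display sequent calculus for the Lambek–Grishin connectives with
units — with the logical rules, the display rules, the identity structural
rules for the units, and the Grishin mixed associativity rules Gr1 and Gr1' —
the sequent (⊥ ∘− A) ⊸ ⊥ ⊢ A is derivable. -/
theorem grishin_derivable (A : Fm) :
    Deriv (St.of (Fm.limp (Fm.rimp Fm.bot A) Fm.bot)) (St.of A) := by
  have hneg : Deriv (St.gt (St.of A) St.eps) (St.of (Fm.rimp Fm.bot A)) :=
    Deriv.gt_eps_rimp_bot (Deriv.ax A)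
  exact Deriv.gt_eps_comma_iff.mp (Deriv.rc2' (Deriv.llimp hneg Deriv.lbot))
end

section
/- In a proof structure built only from binary links, no tensor link can simultaneously form a contraction redex with two distinct par links; i.e., the redexes of distinct binary contractions are disjoint. -/
/-- A proof structure built from binary links: each link has three ports (its
premisses and conclusions, with two ports on one side and one on the other),
one of which is designated as main; every vertex is at most once a premiss and
at most once a conclusion of a link.  `kind l = true` means `l` is a tensor
link, `kind l = false` a par link. -/
structure BinaryProofStructure where
  V : Type
  L : Type
  [decV : DecidableEq V]
  prem : L → List V
  concl : L → List V
  kind : L → Bool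
  main : L → V
  binary : ∀ l, (prem l).length + (concl l).length = 3
  twoSided : ∀ l, (prem l).length ≤ 2 ∧ (concl l).length ≤ 2
  main_mem : ∀ l, main l ∈ prem l ++ concl l
  ports_nodup : ∀ l, (prem l ++ concl l).Nodup
  prem_unique : ∀ (v : V) (l l' : L), v ∈ prem l → v ∈ prem l' → l = l'
  concl_unique : ∀ (v : V) (l l' : L), v ∈ concl l → v ∈ concl l' → l = l'

attribute [instance] BinaryProofStructure.decV

namespace BinaryProofStructure

variable (G : BinaryProofStructure)

/-- A tensor link `t` and a par link `p` form a contraction redex when they are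
connected, respecting up/down orientation, at all ports of the par link except
its main port: every non-main premiss of `p` is a conclusion of `t` and every
non-main conclusion of `p` is a premiss of `t`. -/
def Redex (t p : G.L) : Prop :=
  G.kind t = true ∧ G.kind p = false ∧
  (∀ v ∈ G.prem p, v ≠ G.main p → v ∈ G.concl t) ∧
  (∀ v ∈ G.concl p, v ≠ G.main p → v ∈ G.prem t)

end BinaryProofStructure

/-! The two non-main ports of a par link in a redex with a tensor link `t` are among the three
ports of `t`, so two such pairs must share a vertex `v`.  Which side of `t` the vertex `v` lies on
fixes on which side of both par links it lies, and a vertex is at most once a premiss and at most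
once a conclusion, so both par links coincide. -/

namespace BinaryProofStructure

variable (G : BinaryProofStructure)

def ports (l : G.L) : Finset G.V := (G.prem l ++ G.concl l).toFinset

def auxPorts (l : G.L) : Finset G.V := (G.ports l).erase (G.main l)

theorem card_ports (l : G.L) : (G.ports l).card = 3 := by
  rw [ports, List.toFinset_card_of_nodup (G.ports_nodup l), List.length_append, G.binary l]

theorem card_auxPorts (l : G.L) : (G.auxPorts l).card = 2 := by
  have hmain : G.main l ∈ G.ports l := List.mem_toFinset.mpr (G.main_mem l)
  rw [auxPorts, Finset.card_erase_of_mem hmain, card_ports]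

theorem disjoint_prem_concl (l : G.L) : (G.prem l).Disjoint (G.concl l) :=
  List.disjoint_of_nodup_append (G.ports_nodup l)

variable {G}

theorem Redex.mem_auxPorts {t p : G.L} (h : G.Redex t p) {v : G.V} (hv : v ∈ G.auxPorts p) :
    (v ∈ G.prem p ∧ v ∈ G.concl t) ∨ (v ∈ G.concl p ∧ v ∈ G.prem t) := by
  obtain ⟨-, -, hprem, hconcl⟩ := h
  obtain ⟨hne, hv⟩ := Finset.mem_erase.mp hv
  rcases List.mem_append.mp (List.mem_toFinset.mp hv) with hv | hv
  · exact Or.inl ⟨hv, hprem v hv hne⟩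
  · exact Or.inr ⟨hv, hconcl v hv hne⟩

theorem Redex.auxPorts_subset {t p : G.L} (h : G.Redex t p) : G.auxPorts p ⊆ G.ports t := by
  intro v hv
  refine List.mem_toFinset.mpr (List.mem_append.mpr ?_)
  rcases h.mem_auxPorts hv with ⟨-, hv⟩ | ⟨-, hv⟩
  exacts [Or.inr hv, Or.inl hv]

theorem Redex.eq_of_mem_auxPorts {t p p' : G.L} (h : G.Redex t p) (h' : G.Redex t p') {v : G.V}
    (hv : v ∈ G.auxPorts p) (hv' : v ∈ G.auxPorts p') : p = p' := by
  rcases h.mem_auxPorts hv with ⟨hp, ht⟩ | ⟨hp, ht⟩ <;>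
    rcases h'.mem_auxPorts hv' with ⟨hp', ht'⟩ | ⟨hp', ht'⟩
  · exact G.prem_unique v p p' hp hp'
  · exact absurd ht (G.disjoint_prem_concl t ht')
  · exact absurd ht' (G.disjoint_prem_concl t ht)
  · exact G.concl_unique v p p' hp hp'

end BinaryProofStructure

/-- In a proof structure built only from binary links, no tensor link can
simultaneously form a contraction redex with two distinct par links: the
redexes of distinct binary contractions are disjoint. -/
theorem binary_redexes_disjoint (G : BinaryProofStructure) (t p p' : G.L)
    (h : G.Redex t p) (h' : G.Redex t p') : p = p' := by
  have hcard : (G.ports t).card < (G.auxPorts p).card + (G.auxPorts p').card := by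
    rw [G.card_ports, G.card_auxPorts, G.card_auxPorts]
    decide
  obtain ⟨v, hv⟩ := Finset.inter_nonempty_of_card_lt_card_add_card
    h.auxPorts_subset h'.auxPorts_subset hcard
  exact h.eq_of_mem_auxPorts h' (Finset.mem_inter.mp hv).1 (Finset.mem_inter.mp hv).2
end
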